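/- Let φ be a frame for H with frame bounds A and B such that for some I ⊂ ℕ the subfamily {φ_n : n ∈ I} is a Riesz basis for H with lower frame bound A'. Let ψ be the canonical dual of φ, m ∈ ℓ^∞ and λ ∈ ℂ. If (sup_{n∉I} |m_n − λ|) · (B − A')/A < (inf_{n∈I} |m_n − λ|) · A'/B, then λ lies in the resolvent set of M_{m,φ,ψ}. -/

import Mathlib

/-!
Since `M ∘ S` is the multiplier of `φ` with itself, `(λ - M) ∘ S` is the operator
`D g = ∑ (λ - m n) ⟪φ n, g⟫ φ n`, and `S` is invertible, so it suffices to invert `D`.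
Splitting the sum along `I`, the Riesz part of `D g` has norm at least `inf · A' · ‖g‖` (lower
Riesz bound for the coefficients, then the lower frame bound `A'` of the Riesz basis), while the
rest has norm at most `sup · (B - A') · ‖g‖`, because `{φ n : n ∉ I}` is Bessel with bound
`B - A'`. As `A ≤ B`, the hypothesis gives `sup · (B - A') < inf · A'`, so `D` is bounded below.
Its adjoint is the multiplier with the conjugate symbol, bounded below by the same estimate,
hence `D` is invertible.
-/

open scoped InnerProductSpace

/-- `φ` is a Riesz basis with bounds `A ≤ B`: it is complete and the ℓ²-synthesis
inequalities hold. -/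
def IsRieszBasisWith {H : Type*} [NormedAddCommGroup H] [InnerProductSpace ℂ H]
    {ι : Type*} (φ : ι → H) (A B : ℝ) : Prop :=
  (Submodule.span ℂ (Set.range φ)).topologicalClosure = ⊤ ∧
  ∀ c : ι → ℂ, Summable (fun n => ‖c n‖ ^ 2) →
    ∃ s : H, HasSum (fun n => c n • φ n) s ∧
      A * ∑' n, ‖c n‖ ^ 2 ≤ ‖s‖ ^ 2 ∧ ‖s‖ ^ 2 ≤ B * ∑' n, ‖c n‖ ^ 2

theorem norm_sum_mul_sq_le {R ι : Type*} [SeminormedRing R] (s : Finset ι) (a b : ι → R) :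
    ‖∑ i ∈ s, a i * b i‖ ^ 2 ≤ (∑ i ∈ s, ‖a i‖ ^ 2) * ∑ i ∈ s, ‖b i‖ ^ 2 :=
  calc ‖∑ i ∈ s, a i * b i‖ ^ 2 ≤ (∑ i ∈ s, ‖a i‖ * ‖b i‖) ^ 2 := by
        gcongr
        exact (norm_sum_le _ _).trans (Finset.sum_le_sum fun i _ => norm_mul_le _ _)
    _ ≤ _ := Finset.sum_mul_sq_le_sq_mul_sq s _ _

theorem sq_norm_mul_le_of_norm_le {R : Type*} [SeminormedRing R] {x : R} {b : ℝ} (hx : ‖x‖ ≤ b)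
    (y : R) : ‖x * y‖ ^ 2 ≤ b ^ 2 * ‖y‖ ^ 2 := by
  rw [← mul_pow]
  gcongr
  exact (norm_mul_le x y).trans (by gcongr)

def IsBesselWith (𝕜 : Type*) {H ι : Type*} [RCLike 𝕜] [NormedAddCommGroup H]
    [InnerProductSpace 𝕜 H] (φ : ι → H) (β : ℝ) : Prop :=
  ∀ f : H, Summable (fun n => ‖⟪φ n, f⟫_𝕜‖ ^ 2) ∧ ∑' n, ‖⟪φ n, f⟫_𝕜‖ ^ 2 ≤ β * ‖f‖ ^ 2

namespace IsBesselWith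

variable {𝕜 H ι : Type*} [RCLike 𝕜] [NormedAddCommGroup H] [InnerProductSpace 𝕜 H]
  {φ : ι → H} {β : ℝ}

theorem nonneg [Nontrivial H] (hφ : IsBesselWith 𝕜 φ β) : 0 ≤ β := by
  obtain ⟨f, hf⟩ := exists_ne (0 : H)
  have h := (tsum_nonneg fun n => sq_nonneg ‖⟪φ n, f⟫_𝕜‖).trans (hφ f).2
  exact nonneg_of_mul_nonneg_left h (by positivity)

theorem norm_sum_smul_sq_le (hφ : IsBesselWith 𝕜 φ β) (hβ : 0 ≤ β) (t : Finset ι) (c : ι → 𝕜) :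
    ‖∑ n ∈ t, c n • φ n‖ ^ 2 ≤ β * ∑ n ∈ t, ‖c n‖ ^ 2 := by
  set v := ∑ n ∈ t, c n • φ n
  have hvv : ⟪v, v⟫_𝕜 = ∑ n ∈ t, c n * ⟪v, φ n⟫_𝕜 := by
    simp only [v, inner_sum, inner_smul_right]
  have key : (‖v‖ ^ 2) ^ 2 ≤ (β * ∑ n ∈ t, ‖c n‖ ^ 2) * ‖v‖ ^ 2 :=
    calc (‖v‖ ^ 2) ^ 2 = ‖∑ n ∈ t, c n * ⟪v, φ n⟫_𝕜‖ ^ 2 := by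
          rw [← hvv, inner_self_eq_norm_sq_to_K]; simp
      _ ≤ (∑ n ∈ t, ‖c n‖ ^ 2) * ∑ n ∈ t, ‖⟪φ n, v⟫_𝕜‖ ^ 2 := by
          simpa only [norm_inner_symm v] using norm_sum_mul_sq_le t c (fun n => ⟪v, φ n⟫_𝕜)
      _ ≤ (∑ n ∈ t, ‖c n‖ ^ 2) * (β * ‖v‖ ^ 2) := by
          gcongr
          exact ((hφ v).1.sum_le_tsum t fun n _ => sq_nonneg _).trans (hφ v).2
      _ = _ := by ring
  rcases (sq_nonneg ‖v‖).eq_or_lt with hv | hv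
  · rw [← hv]; positivity
  · exact le_of_mul_le_mul_right (by simpa only [sq] using key) hv

theorem exists_hasSum_smul [CompleteSpace H] (hφ : IsBesselWith 𝕜 φ β) (hβ : 0 ≤ β)
    {c : ι → 𝕜} (hc : Summable fun n => ‖c n‖ ^ 2) :
    ∃ v, HasSum (fun n => c n • φ n) v ∧ ‖v‖ ^ 2 ≤ β * ∑' n, ‖c n‖ ^ 2 := by
  have hsum : Summable fun n => c n • φ n := by
    refine summable_iff_vanishing_norm.2 fun ε hε => ?_
    obtain ⟨s, hs⟩ := summable_iff_vanishing_norm.1 hc (ε ^ 2 / (β + 1)) (by positivity)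
    refine ⟨s, fun t ht => lt_of_pow_lt_pow_left₀ 2 hε.le ?_⟩
    have hct := hs t ht
    rw [Real.norm_of_nonneg (Finset.sum_nonneg fun n _ => sq_nonneg _),
      lt_div_iff₀ (by positivity)] at hct
    have := hφ.norm_sum_smul_sq_le hβ t c
    nlinarith [Finset.sum_nonneg fun n (_ : n ∈ t) => sq_nonneg ‖c n‖]
  refine ⟨_, hsum.hasSum, le_of_tendsto' (hsum.hasSum.norm.pow 2) fun t => ?_⟩
  exact (hφ.norm_sum_smul_sq_le hβ t c).trans <|
    mul_le_mul_of_nonneg_left (hc.sum_le_tsum t fun n _ => sq_nonneg _) hβ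

theorem summable_norm_mul_inner_sq (hφ : IsBesselWith 𝕜 φ β) {μ : ι → 𝕜} {b : ℝ}
    (hμ : ∀ n, ‖μ n‖ ≤ b) (g : H) : Summable fun n => ‖μ n * ⟪φ n, g⟫_𝕜‖ ^ 2 :=
  .of_nonneg_of_le (fun _ => sq_nonneg _) (fun n => sq_norm_mul_le_of_norm_le (hμ n) _)
    ((hφ g).1.mul_left _)

theorem exists_hasSum_mul_inner_smul [CompleteSpace H] (hφ : IsBesselWith 𝕜 φ β) (hβ : 0 ≤ β)
    {μ : ι → 𝕜} {b : ℝ} (hb : 0 ≤ b) (hμ : ∀ n, ‖μ n‖ ≤ b) (g : H) :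
    ∃ v, HasSum (fun n => (μ n * ⟪φ n, g⟫_𝕜) • φ n) v ∧ ‖v‖ ≤ b * β * ‖g‖ := by
  have hc := hφ.summable_norm_mul_inner_sq hμ g
  obtain ⟨v, hv, hvc⟩ := hφ.exists_hasSum_smul hβ hc
  refine ⟨v, hv, (pow_le_pow_iff_left₀ (norm_nonneg v) (by positivity) two_ne_zero).1 ?_⟩
  calc ‖v‖ ^ 2 ≤ β * ∑' n, ‖μ n * ⟪φ n, g⟫_𝕜‖ ^ 2 := hvc
    _ ≤ β * (b ^ 2 * (β * ‖g‖ ^ 2)) := by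
      gcongr
      calc ∑' n, ‖μ n * ⟪φ n, g⟫_𝕜‖ ^ 2 ≤ ∑' n, b ^ 2 * ‖⟪φ n, g⟫_𝕜‖ ^ 2 :=
            hc.tsum_le_tsum (fun n => sq_norm_mul_le_of_norm_le (hμ n) _) ((hφ g).1.mul_left _)
        _ = b ^ 2 * ∑' n, ‖⟪φ n, g⟫_𝕜‖ ^ 2 := tsum_mul_left
        _ ≤ b ^ 2 * (β * ‖g‖ ^ 2) := by gcongr; exact (hφ g).2
    _ = (b * β * ‖g‖) ^ 2 := by ring

end IsBesselWith

namespace IsRieszBasisWith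

variable {H κ : Type*} [NormedAddCommGroup H] [InnerProductSpace ℂ H] {e : κ → H} {A' B' : ℝ}

theorem mul_norm_inner_sq_le_of_mem_span (h : IsRieszBasisWith e A' B') (hA' : 0 ≤ A') {f : H}
    (hf : Summable fun n => ‖⟪e n, f⟫_ℂ‖ ^ 2) {x : H} (hx : x ∈ Submodule.span ℂ (Set.range e)) :
    A' * ‖⟪x, f⟫_ℂ‖ ^ 2 ≤ (∑' n, ‖⟪e n, f⟫_ℂ‖ ^ 2) * ‖x‖ ^ 2 := by
  obtain ⟨c, rfl⟩ := Finsupp.mem_span_range_iff_exists_finsupp.1 hx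
  have hzero : ∀ n ∉ c.support, ‖c n‖ ^ 2 = 0 := fun n hn => by
    simp [Finsupp.notMem_support_iff.1 hn]
  obtain ⟨s, hs, hlow, -⟩ := h.2 c (summable_of_ne_finset_zero hzero)
  have hsx : (c.sum fun n a => a • e n) = s :=
    (hasSum_sum_of_ne_finset_zero fun n hn => by simp [Finsupp.notMem_support_iff.1 hn]).unique hs
  have hinner : ⟪s, f⟫_ℂ = ∑ n ∈ c.support, starRingEnd ℂ (c n) * ⟪e n, f⟫_ℂ := by
    rw [← hsx, Finsupp.sum, sum_inner]
    simp only [inner_smul_left]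
  rw [hsx]
  rw [tsum_eq_sum hzero] at hlow
  calc A' * ‖⟪s, f⟫_ℂ‖ ^ 2
      ≤ A' * ((∑ n ∈ c.support, ‖c n‖ ^ 2) * ∑ n ∈ c.support, ‖⟪e n, f⟫_ℂ‖ ^ 2) := by
        gcongr
        simpa only [hinner, RCLike.norm_conj] using
          norm_sum_mul_sq_le c.support (fun n => starRingEnd ℂ (c n)) fun n => ⟪e n, f⟫_ℂ
    _ ≤ ‖s‖ ^ 2 * ∑' n, ‖⟪e n, f⟫_ℂ‖ ^ 2 := by
        rw [← mul_assoc]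
        exact mul_le_mul hlow (hf.sum_le_tsum _ fun n _ => sq_nonneg _)
          (Finset.sum_nonneg fun n _ => sq_nonneg _) (sq_nonneg _)
    _ = _ := mul_comm _ _

theorem lower_frame_bound (h : IsRieszBasisWith e A' B') (hA' : 0 ≤ A') {f : H}
    (hf : Summable fun n => ‖⟪e n, f⟫_ℂ‖ ^ 2) : A' * ‖f‖ ^ 2 ≤ ∑' n, ‖⟪e n, f⟫_ℂ‖ ^ 2 := by
  set t := ∑' n, ‖⟪e n, f⟫_ℂ‖ ^ 2
  have hclosed : IsClosed {x : H | A' * ‖⟪x, f⟫_ℂ‖ ^ 2 ≤ t * ‖x‖ ^ 2} :=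
    isClosed_le (by fun_prop) (by fun_prop)
  have hff : A' * ‖⟪f, f⟫_ℂ‖ ^ 2 ≤ t * ‖f‖ ^ 2 := by
    refine closure_minimal (fun x hx => h.mul_norm_inner_sq_le_of_mem_span hA' hf hx) hclosed ?_
    rw [← Submodule.topologicalClosure_coe, h.1]
    trivial
  rw [inner_self_eq_norm_sq_to_K, norm_pow, RCLike.norm_ofReal, abs_norm] at hff
  rcases (sq_nonneg ‖f‖).eq_or_lt with hf0 | hf0
  · rw [← hf0, mul_zero]
    exact tsum_nonneg fun n => sq_nonneg _
  · exact le_of_mul_le_mul_right (by nlinarith) hf0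

theorem exists_hasSum_mul_inner_smul (h : IsRieszBasisWith e A' B') (hA' : 0 ≤ A')
    {μ : κ → ℂ} {a : ℝ} (ha : 0 ≤ a) (hμ : ∀ n, a ≤ ‖μ n‖) {g : H}
    (hg : Summable fun n => ‖⟪e n, g⟫_ℂ‖ ^ 2) (hc : Summable fun n => ‖μ n * ⟪e n, g⟫_ℂ‖ ^ 2) :
    ∃ v, HasSum (fun n => (μ n * ⟪e n, g⟫_ℂ) • e n) v ∧ a * A' * ‖g‖ ≤ ‖v‖ := by
  obtain ⟨v, hv, hlow, -⟩ := h.2 _ hc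
  refine ⟨v, hv, (pow_le_pow_iff_left₀ (by positivity) (norm_nonneg v) two_ne_zero).1 ?_⟩
  have hterm : ∀ n, a ^ 2 * ‖⟪e n, g⟫_ℂ‖ ^ 2 ≤ ‖μ n * ⟪e n, g⟫_ℂ‖ ^ 2 := fun n => by
    rw [norm_mul, mul_pow]
    gcongr
    exact hμ n
  calc (a * A' * ‖g‖) ^ 2 = A' * (a ^ 2 * (A' * ‖g‖ ^ 2)) := by ring
    _ ≤ A' * (a ^ 2 * ∑' n, ‖⟪e n, g⟫_ℂ‖ ^ 2) := by gcongr; exact h.lower_frame_bound hA' hg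
    _ = A' * ∑' n, a ^ 2 * ‖⟪e n, g⟫_ℂ‖ ^ 2 := by rw [tsum_mul_left]
    _ ≤ A' * ∑' n, ‖μ n * ⟪e n, g⟫_ℂ‖ ^ 2 :=
        mul_le_mul_of_nonneg_left ((hg.mul_left _).tsum_le_tsum hterm hc) hA'
    _ ≤ ‖v‖ ^ 2 := hlow

end IsRieszBasisWith

theorem inner_eq_of_hasSum_mul_inner_smul {𝕜 H ι : Type*} [RCLike 𝕜] [NormedAddCommGroup H]
    [InnerProductSpace 𝕜 H] {φ : ι → H} (μ : ι → 𝕜) {f g x y : H}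
    (hx : HasSum (fun n => (μ n * ⟪φ n, g⟫_𝕜) • φ n) x)
    (hy : HasSum (fun n => (starRingEnd 𝕜 (μ n) * ⟪φ n, f⟫_𝕜) • φ n) y) :
    ⟪x, f⟫_𝕜 = ⟪g, y⟫_𝕜 := by
  have hxf := (hx.mapL (innerSL 𝕜 f)).star
  have hgy := hy.mapL (innerSL 𝕜 g)
  simp only [innerSL_apply_apply, inner_smul_right] at hxf hgy
  have hterms : (fun n => star (μ n * ⟪φ n, g⟫_𝕜 * ⟪f, φ n⟫_𝕜)) =
      fun n => starRingEnd 𝕜 (μ n) * ⟪φ n, f⟫_𝕜 * ⟪g, φ n⟫_𝕜 := by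
    ext n
    simp only [star_mul', RCLike.star_def, inner_conj_symm]
    ring
  rw [← inner_conj_symm x f, ← RCLike.star_def]
  exact (hterms ▸ hxf).unique hgy

theorem hasSum_mul_inner_smul_apply_frameOperator {𝕜 H ι : Type*} [RCLike 𝕜]
    [NormedAddCommGroup H] [InnerProductSpace 𝕜 H] {φ : ι → H} {S Sinv M : H →L[𝕜] H}
    (hS : ∀ f, HasSum (fun n => ⟪φ n, f⟫_𝕜 • φ n) (S f)) (hSinv : ∀ x, S (Sinv x) = x)
    {m : ι → 𝕜} (hM : ∀ f, HasSum (fun n => (m n * ⟪Sinv (φ n), f⟫_𝕜) • φ n) (M f)) (g : H) :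
    HasSum (fun n => (m n * ⟪φ n, g⟫_𝕜) • φ n) (M (S g)) := by
  have hS_symm : ∀ f g, ⟪S f, g⟫_𝕜 = ⟪f, S g⟫_𝕜 := fun f g =>
    inner_eq_of_hasSum_mul_inner_smul (fun _ => 1) (by simpa using hS f) (by simpa using hS g)
  simpa only [← hS_symm, hSinv] using hM (S g)

theorem IsBesselWith.compl_of_isRieszBasisWith {H ι : Type*} [NormedAddCommGroup H]
    [InnerProductSpace ℂ H] {φ : ι → H} {B A' B' : ℝ} {I : Set ι} (hφ : IsBesselWith ℂ φ B)
    (hR : IsRieszBasisWith (fun n : I => φ n) A' B') (hA' : 0 ≤ A') :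
    IsBesselWith ℂ (fun n : ↥Iᶜ => φ n) (B - A') := fun f => by
  have hI := (hφ f).1.comp_injective (Subtype.val_injective (p := (· ∈ I)))
  have hIc := (hφ f).1.comp_injective (Subtype.val_injective (p := (· ∈ Iᶜ)))
  refine ⟨hIc, ?_⟩
  have hsplit := hI.tsum_add_tsum_compl hIc
  have hlow := hR.lower_frame_bound hA' hI
  linarith [(hφ f).2]

theorem IsBesselWith.exists_hasSum_mul_inner_smul_of_isRieszBasisWith {H ι : Type*}
    [NormedAddCommGroup H] [InnerProductSpace ℂ H] [CompleteSpace H] {φ : ι → H}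
    {B A' B' : ℝ} {I : Set ι} (hφ : IsBesselWith ℂ φ B)
    (hR : IsRieszBasisWith (fun n : I => φ n) A' B') (hA' : 0 ≤ A') (hBA' : 0 ≤ B - A')
    {μ : ι → ℂ} {C a b : ℝ} (hμ : ∀ n, ‖μ n‖ ≤ C) (ha : 0 ≤ a) (hμI : ∀ n ∈ I, a ≤ ‖μ n‖)
    (hb : 0 ≤ b) (hμIc : ∀ n ∉ I, ‖μ n‖ ≤ b) (g : H) :
    ∃ v, HasSum (fun n => (μ n * ⟪φ n, g⟫_ℂ) • φ n) v ∧ (a * A' - b * (B - A')) * ‖g‖ ≤ ‖v‖ := by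
  obtain ⟨vI, hvI, hvI_le⟩ := hR.exists_hasSum_mul_inner_smul hA' ha (μ := fun n : I => μ n)
    (fun n => hμI n n.2) ((hφ g).1.comp_injective Subtype.val_injective)
    ((hφ.summable_norm_mul_inner_sq hμ g).comp_injective Subtype.val_injective)
  obtain ⟨vC, hvC, hvC_le⟩ := (hφ.compl_of_isRieszBasisWith hR hA').exists_hasSum_mul_inner_smul
    hBA' hb (μ := fun n : ↥Iᶜ => μ n) (fun n => hμIc n n.2) g
  refine ⟨vI + vC, hvI.add_compl hvC, ?_⟩
  calc (a * A' - b * (B - A')) * ‖g‖ = a * A' * ‖g‖ - b * (B - A') * ‖g‖ := by ring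
    _ ≤ ‖vI‖ - ‖vC‖ := sub_le_sub hvI_le hvC_le
    _ ≤ ‖vI + vC‖ := by simpa using norm_sub_norm_le vI (-vC)

theorem ContinuousLinearMap.isUnit_of_bounded_below_of_adjoint_bounded_below {𝕜 E : Type*}
    [RCLike 𝕜] [NormedAddCommGroup E] [InnerProductSpace 𝕜 E] [CompleteSpace E]
    {T : E →L[𝕜] E} {c : ℝ} (hc : 0 < c) (hT : ∀ x, c * ‖x‖ ≤ ‖T x‖)
    (hT' : ∀ x, c * ‖x‖ ≤ ‖ContinuousLinearMap.adjoint T x‖) : IsUnit T := by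
  rw [isUnit_iff_bijective, bijective_iff_dense_range_and_antilipschitz]
  refine ⟨?_, (Real.toNNReal c)⁻¹, T.antilipschitz_of_bound fun x => ?_⟩
  · rw [Submodule.topologicalClosure_eq_top_iff, T.orthogonal_range, Submodule.eq_bot_iff]
    intro x hx
    have := hT' x
    rw [show ContinuousLinearMap.adjoint T x = 0 from hx, norm_zero] at this
    exact norm_le_zero_iff.1 (nonpos_of_mul_nonpos_right this hc)
  · rw [NNReal.coe_inv, Real.coe_toNNReal c hc.le, inv_mul_eq_div, le_div_iff₀ hc, mul_comm]
    exact hT x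

theorem IsBesselWith.isUnit_of_hasSum_mul_inner_smul_of_isRieszBasisWith {H ι : Type*}
    [NormedAddCommGroup H] [InnerProductSpace ℂ H] [CompleteSpace H] {φ : ι → H}
    {B A' B' : ℝ} {I : Set ι} (hφ : IsBesselWith ℂ φ B)
    (hR : IsRieszBasisWith (fun n : I => φ n) A' B') (hA' : 0 ≤ A') (hBA' : 0 ≤ B - A')
    {μ : ι → ℂ} {C : ℝ} (hμ : ∀ n, ‖μ n‖ ≤ C)
    (hμIIc : (⨆ n : {n // n ∉ I}, ‖μ n‖) * (B - A') < (⨅ n : I, ‖μ n‖) * A')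
    {T : H →L[ℂ] H} (hT : ∀ g, HasSum (fun n => (μ n * ⟪φ n, g⟫_ℂ) • φ n) (T g)) :
    IsUnit T := by
  have ha := Real.iInf_nonneg fun n : I => norm_nonneg (μ n)
  have hb := Real.iSup_nonneg fun n : {n // n ∉ I} => norm_nonneg (μ n)
  have hμI : ∀ n ∈ I, ⨅ n : I, ‖μ n‖ ≤ ‖μ n‖ := fun n hn =>
    ciInf_le (f := fun n : I => ‖μ n‖) ⟨0, by rintro _ ⟨k, rfl⟩; positivity⟩ ⟨n, hn⟩
  have hμIc : ∀ n ∉ I, ‖μ n‖ ≤ ⨆ n : {n // n ∉ I}, ‖μ n‖ := fun n hn =>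
    le_ciSup (f := fun n : {n // n ∉ I} => ‖μ n‖) ⟨C, by rintro _ ⟨k, rfl⟩; exact hμ k⟩ ⟨n, hn⟩
  refine ContinuousLinearMap.isUnit_of_bounded_below_of_adjoint_bounded_below
    (sub_pos.2 hμIIc) (fun g => ?_) (fun f => ?_)
  · obtain ⟨v, hv, hle⟩ :=
      hφ.exists_hasSum_mul_inner_smul_of_isRieszBasisWith hR hA' hBA' hμ ha hμI hb hμIc g
    rwa [(hT g).unique hv]
  · obtain ⟨v, hv, hle⟩ := hφ.exists_hasSum_mul_inner_smul_of_isRieszBasisWith hR hA' hBA'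
      (μ := fun n => starRingEnd ℂ (μ n)) (by simpa only [RCLike.norm_conj] using hμ) ha
      (by simpa only [RCLike.norm_conj] using hμI) hb
      (by simpa only [RCLike.norm_conj] using hμIc) f
    have hadj : ContinuousLinearMap.adjoint T f = v := ext_inner_left ℂ fun g => by
      rw [ContinuousLinearMap.adjoint_inner_right]
      exact inner_eq_of_hasSum_mul_inner_smul μ (hT g) hv
    rwa [hadj]

/-- corollary for a frame `φ` with bounds `A, B` whose subfamily over `I`
is a Riesz basis with lower bound `A'`, `ψ` the canonical dual of `φ`: if
`(sup_{n∉I}|m n − λ|)·(B−A')/A < (inf_{n∈I}|m n − λ|)·A'/B`, then `λ` is in the resolvent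
set of `M_{m,φ,ψ}`. -/
theorem resolvent_multiplier_canonical_dual_of_riesz_part
    {H : Type*} [NormedAddCommGroup H] [InnerProductSpace ℂ H] [CompleteSpace H]
    (φ : ℕ → H) (A B : ℝ) (hA : 0 < A) (hB : 0 < B)
    (hframe : ∀ f : H, ∃ s : ℝ, HasSum (fun n => ‖⟪φ n, f⟫_ℂ‖ ^ 2) s ∧
      A * ‖f‖ ^ 2 ≤ s ∧ s ≤ B * ‖f‖ ^ 2)
    (I : Set ℕ) (A' : ℝ) (hA' : 0 < A')
    (hφ1 : ∃ B1 : ℝ, IsRieszBasisWith (fun n : I => φ n) A' B1)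
    (S : H →L[ℂ] H) (hS : ∀ f : H, HasSum (fun n => ⟪φ n, f⟫_ℂ • φ n) (S f))
    (Sinv : H →L[ℂ] H) (hSinv : ∀ x : H, Sinv (S x) = x ∧ S (Sinv x) = x)
    (ψ : ℕ → H) (hψ : ∀ n, ψ n = Sinv (φ n))
    (m : ℕ → ℂ) (hm : ∃ C : ℝ, ∀ n, ‖m n‖ ≤ C)
    (M : H →L[ℂ] H)
    (hM : ∀ f : H, HasSum (fun n => (m n * ⟪ψ n, f⟫_ℂ) • φ n) (M f))
    (lam : ℂ)
    (hcond : (⨆ n : {n : ℕ // n ∉ I}, ‖m n - lam‖) * ((B - A') / A) <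
      (⨅ n : I, ‖m n - lam‖) * (A' / B)) :
    lam ∈ resolventSet ℂ M := by
  rcases subsingleton_or_nontrivial H with hH | hH
  · exact spectrum.mem_resolventSet_iff.2 (isUnit_of_subsingleton _)
  obtain ⟨B1, hR⟩ := hφ1
  obtain ⟨C, hC⟩ := hm
  have hφ : IsBesselWith ℂ φ B := fun f => by
    obtain ⟨s, hs, -, hsB⟩ := hframe f
    exact ⟨hs.summable, hs.tsum_eq ▸ hsB⟩
  have hBA' : 0 ≤ B - A' := (hφ.compl_of_isRieszBasisWith hR hA'.le).nonneg
  have hAB : A ≤ B := by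
    obtain ⟨f, hf⟩ := exists_ne (0 : H)
    obtain ⟨s, -, hAs, hsB⟩ := hframe f
    exact le_of_mul_le_mul_right (hAs.trans hsB) (by positivity)
  have hcst : (⨆ n : {n // n ∉ I}, ‖lam - m n‖) * (B - A') < (⨅ n : I, ‖lam - m n‖) * A' := by
    simp_rw [norm_sub_rev lam]
    rw [← mul_div_assoc, ← mul_div_assoc, div_lt_div_iff₀ hA hB] at hcond
    have hsup := Real.iSup_nonneg fun n : {n // n ∉ I} => norm_nonneg (m n - lam)
    nlinarith [mul_nonneg (mul_nonneg hsup hBA') (sub_nonneg.2 hAB)]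
  simp only [hψ] at hM
  have hD : ∀ g, HasSum (fun n => ((lam - m n) * ⟪φ n, g⟫_ℂ) • φ n)
      (((algebraMap ℂ (H →L[ℂ] H) lam - M) * S) g) := fun g => by
    simpa [sub_mul, sub_smul, mul_smul, Algebra.algebraMap_eq_smul_one] using
      ((hS g).const_smul lam).sub
        (hasSum_mul_inner_smul_apply_frameOperator hS (fun x => (hSinv x).2) hM g)
  have hS_unit : IsUnit S := ⟨⟨S, Sinv, ContinuousLinearMap.ext fun x => (hSinv x).2,
    ContinuousLinearMap.ext fun x => (hSinv x).1⟩, rfl⟩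
  rw [spectrum.mem_resolventSet_iff, ← hS_unit.mul_right_iff]
  have hμ : ∀ n, ‖lam - m n‖ ≤ ‖lam‖ + C := fun n => (norm_sub_le _ _).trans (by linarith [hC n])
  exact hφ.isUnit_of_hasSum_mul_inner_smul_of_isRieszBasisWith hR hA'.le hBA' hμ hcst hD
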